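/- Under the hypothesis |D²V(x)| ≤ C⟨∇V(x)⟩^{1−ρ₀} (ρ₀ > 0), for every c > 0 there exists C₁(c) ≥ 1 such that ⟨∇V(y)⟩ ≤ C₁(c)⟨∇V(x)⟩ whenever |x−y| ≤ c⟨∇V(x)⟩^{−s}, where s > 0 is fixed. -/

import Mathlib

/-!
Since `s > 0`, `|x - y| ≤ c`. Let `M` be the maximum of `⟨∇V⟩` on the segment `[x, y]`.
Since `a ↦ √(a² + 1)` is 1-Lipschitz, the mean value inequality and the Hessian bound give
`M ≤ ⟨∇V(x)⟩ + C c M^{1-ρ}`, where `ρ = min ρ₀ 1` keeps the exponent `1 - ρ` nonnegative so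
that the Hessian bound is monotone along the segment. Dividing by `⟨∇V(x)⟩ ≥ 1`, the ratio
`F = M / ⟨∇V(x)⟩` satisfies `F ≤ 1 + C c F^{1-ρ}`, and such an `F` is bounded by
`max 2 ((2 C c)^{1/ρ})`: otherwise `C c F^{1-ρ} < F / 2` and `F < 2`.
-/

noncomputable section

/-- The Japanese bracket of the gradient: `⟨∇V(x)⟩ = √(1 + |∇V(x)|²)`. -/
def japGrad {d : ℕ} (V : EuclideanSpace ℝ (Fin d) → ℝ) (x : EuclideanSpace ℝ (Fin d)) : ℝ :=
  Real.sqrt (‖fderiv ℝ V x‖ ^ 2 + 1)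

lemma le_max_of_le_one_add_mul_rpow {F K ρ : ℝ} (hK : 0 ≤ K) (hρ : 0 < ρ)
    (h : F ≤ 1 + K * F ^ (1 - ρ)) : F ≤ max 2 ((2 * K) ^ (1 / ρ)) := by
  by_contra! hF
  obtain ⟨h2F, hKF⟩ := max_lt_iff.mp hF
  have hF0 : 0 < F := by linarith
  have hFρ : 2 * K < F ^ ρ := by
    have := Real.rpow_lt_rpow (Real.rpow_nonneg (by linarith) _) hKF hρ
    rwa [← Real.rpow_mul (by linarith), one_div_mul_cancel hρ.ne', Real.rpow_one] at this
  have hsplit : F ^ ρ * F ^ (1 - ρ) = F := by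
    rw [← Real.rpow_add hF0, add_sub_cancel, Real.rpow_one]
  have hhalf : K * F ^ (1 - ρ) < F / 2 := by
    have := mul_lt_mul_of_pos_right hFρ (Real.rpow_pos_of_pos hF0 (1 - ρ))
    linarith
  linarith

lemma le_max_mul_of_le_add_mul_rpow {J M K ρ : ℝ} (hJ : 1 ≤ J) (hM : 0 ≤ M) (hK : 0 ≤ K)
    (hρ : 0 < ρ) (h : M ≤ J + K * M ^ (1 - ρ)) : M ≤ max 2 ((2 * K) ^ (1 / ρ)) * J := by
  have hJ0 : 0 < J := one_pos.trans_le hJ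
  set F := M / J
  have hMF : M = F * J := (div_mul_cancel₀ M hJ0.ne').symm
  have hJρ : J ^ (1 - ρ) ≤ J := by
    simpa using Real.rpow_le_rpow_of_exponent_le hJ (by linarith : 1 - ρ ≤ 1)
  have hFJ : F * J ≤ (1 + K * F ^ (1 - ρ)) * J :=
    calc F * J = M := hMF.symm
      _ ≤ J + K * (F ^ (1 - ρ) * J ^ (1 - ρ)) := by
        rwa [← Real.mul_rpow (div_nonneg hM hJ0.le) hJ0.le, ← hMF]
      _ ≤ J + K * (F ^ (1 - ρ) * J) := by gcongr
      _ = (1 + K * F ^ (1 - ρ)) * J := by ring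
  rw [hMF]
  exact mul_le_mul_of_nonneg_right
    (le_max_of_le_one_add_mul_rpow hK hρ (le_of_mul_le_mul_right hFJ hJ0)) hJ0.le

section japGrad

variable {d : ℕ} {V : EuclideanSpace ℝ (Fin d) → ℝ}

lemma one_le_japGrad (x : EuclideanSpace ℝ (Fin d)) : 1 ≤ japGrad V x :=
  Real.one_le_sqrt.mpr (by nlinarith [sq_nonneg ‖fderiv ℝ V x‖])

lemma continuous_japGrad (hf : Continuous (fderiv ℝ V)) : Continuous (japGrad V) :=
  Real.continuous_sqrt.comp ((hf.norm.pow 2).add continuous_const)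

lemma japGrad_le_add_norm_sub (x y : EuclideanSpace ℝ (Fin d)) :
    japGrad V y ≤ japGrad V x + ‖fderiv ℝ V y - fderiv ℝ V x‖ := by
  have hJ : japGrad V x ^ 2 = ‖fderiv ℝ V x‖ ^ 2 + 1 := Real.sq_sqrt (by positivity)
  have hJ0 : 0 ≤ japGrad V x := Real.sqrt_nonneg _
  have hy := norm_le_norm_add_norm_sub' (fderiv ℝ V y) (fderiv ℝ V x)
  have hxJ : ‖fderiv ℝ V x‖ ≤ japGrad V x := by nlinarith [norm_nonneg (fderiv ℝ V x)]
  refine Real.sqrt_le_iff.mpr ⟨by positivity, ?_⟩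
  nlinarith [norm_nonneg (fderiv ℝ V y), norm_nonneg (fderiv ℝ V y - fderiv ℝ V x)]

lemma exists_japGrad_segment_bound (hV : ContDiff ℝ 2 V) {C ρ : ℝ} (hC0 : 0 ≤ C) (hρ : ρ ≤ 1)
    (hC : ∀ z, ‖fderiv ℝ (fderiv ℝ V) z‖ ≤ C * japGrad V z ^ (1 - ρ))
    (x y : EuclideanSpace ℝ (Fin d)) :
    ∃ M, japGrad V x ≤ M ∧ japGrad V y ≤ M ∧
      M ≤ japGrad V x + C * ‖y - x‖ * M ^ (1 - ρ) := by
  have hf : ContDiff ℝ 1 (fderiv ℝ V) := hV.fderiv_right (by norm_num)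
  have hseg : IsCompact (segment ℝ x y) := by
    rw [segment_eq_image ℝ x y]
    exact isCompact_Icc.image (by fun_prop)
  obtain ⟨z, hz, hzmax⟩ := hseg.exists_isMaxOn
    ⟨x, left_mem_segment ℝ x y⟩ (continuous_japGrad hf.continuous).continuousOn
  refine ⟨japGrad V z, hzmax (left_mem_segment ℝ x y), hzmax (right_mem_segment ℝ x y), ?_⟩
  have hHess : ∀ w ∈ segment ℝ x y,
      ‖fderiv ℝ (fderiv ℝ V) w‖ ≤ C * japGrad V z ^ (1 - ρ) := fun w hw =>
    (hC w).trans (mul_le_mul_of_nonneg_left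
      (Real.rpow_le_rpow (zero_le_one.trans (one_le_japGrad w)) (hzmax hw) (by linarith)) hC0)
  have hmvt := (convex_segment x y).norm_image_sub_le_of_norm_fderiv_le
    (fun w _ => hf.differentiable one_ne_zero w) hHess (left_mem_segment ℝ x y) hz
  calc japGrad V z ≤ japGrad V x + ‖fderiv ℝ V z - fderiv ℝ V x‖ := japGrad_le_add_norm_sub x z
    _ ≤ japGrad V x + C * japGrad V z ^ (1 - ρ) * ‖z - x‖ := by gcongr
    _ ≤ japGrad V x + C * japGrad V z ^ (1 - ρ) * ‖y - x‖ := by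
      have hJz : 0 ≤ japGrad V z := Real.sqrt_nonneg _
      gcongr
      exact norm_sub_le_of_mem_segment hz
    _ = japGrad V x + C * ‖y - x‖ * japGrad V z ^ (1 - ρ) := by ring

end japGrad

/-- under `|D²V(x)| ≤ C⟨∇V(x)⟩^{1−ρ₀}` (`ρ₀ > 0`), for every `c > 0`
there exists `C₁(c) ≥ 1` such that `⟨∇V(y)⟩ ≤ C₁(c)⟨∇V(x)⟩` whenever
`|x−y| ≤ c⟨∇V(x)⟩^{−s}`, `s > 0` being fixed. -/
theorem gradient_comparison (d : ℕ) (V : EuclideanSpace ℝ (Fin d) → ℝ) (hV : ContDiff ℝ 2 V)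
    (C ρ₀ s : ℝ) (hρ₀ : 0 < ρ₀) (hs : 0 < s)
    (hC : ∀ x, ‖fderiv ℝ (fderiv ℝ V) x‖ ≤ C * japGrad V x ^ (1 - ρ₀)) :
    ∀ c : ℝ, 0 < c → ∃ C₁ : ℝ, 1 ≤ C₁ ∧
      ∀ x y : EuclideanSpace ℝ (Fin d),
        ‖x - y‖ ≤ c * japGrad V x ^ (-s) → japGrad V y ≤ C₁ * japGrad V x := by
  intro c hc
  have hC0 : 0 ≤ C := nonneg_of_mul_nonneg_left
    ((norm_nonneg (fderiv ℝ (fderiv ℝ V) 0)).trans (hC 0))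
    (Real.rpow_pos_of_pos (one_pos.trans_le (one_le_japGrad 0)) _)
  set ρ := min ρ₀ 1
  have hCρ : ∀ x, ‖fderiv ℝ (fderiv ℝ V) x‖ ≤ C * japGrad V x ^ (1 - ρ) := fun x =>
    (hC x).trans (by
      gcongr
      exacts [one_le_japGrad x, min_le_left ρ₀ 1])
  refine ⟨max 2 ((2 * (C * c)) ^ (1 / ρ)), one_le_two.trans (le_max_left _ _), fun x y hxy => ?_⟩
  have hyx : ‖y - x‖ ≤ c := by
    rw [norm_sub_rev]
    exact hxy.trans (mul_le_of_le_one_right hc.le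
      (Real.rpow_le_one_of_one_le_of_nonpos (one_le_japGrad x) (by linarith)))
  obtain ⟨M, hxM, hyM, hM⟩ := exists_japGrad_segment_bound hV hC0 (min_le_right ρ₀ 1) hCρ x y
  have hM0 : 0 ≤ M := zero_le_one.trans ((one_le_japGrad x).trans hxM)
  have hM' : M ≤ japGrad V x + C * c * M ^ (1 - ρ) := hM.trans (by gcongr)
  exact hyM.trans (le_max_mul_of_le_add_mul_rpow (one_le_japGrad x) hM0 (by positivity)
    (lt_min hρ₀ one_pos) hM')
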